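/- arXiv:1907.04209 — 4 statements merged into one kernel-verified Lean document; each statement's English description precedes it below -/
import Mathlib

section
/- For F_t-measurable random row vectors Z_t, Z̃_t in R^{1×d}, the relation Z_t ∼_{M_{t+1}} Z̃_t (i.e. Z_t M_{t+1} = Z̃_t M_{t+1} a.s.) holds if and only if (Z_t - Z̃_t) is a.s. a multiple of the all-ones row vector, assuming E[W_{t+1}|F_t] has all entries strictly positive. -/
open MeasureTheory Matrix

/-- **Characterization of the equivalence relation `∼_{M_{t+1}}`.**  For `ℱ_t`-measurable
random row vectors `Z_t, Z̃_t` in `ℝ^{1×d}`, with `W_{t+1}` valued in the standard basis of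
`ℝ^d` and `P_t = 𝔼[W_{t+1}|ℱ_t]` having all entries strictly positive,
`Z_t M_{t+1} = Z̃_t M_{t+1}` a.s. holds if and only if `Z_t - Z̃_t` is a.s. a multiple of the
all-ones row vector, where `M_{t+1} = W_{t+1} - P_t`. -/
theorem equivalence_relation_characterization
    {Ω : Type*} [mΩ : MeasurableSpace Ω] [Fintype Ω] [MeasurableSingletonClass Ω]
    (μ : Measure Ω) [IsProbabilityMeasure μ] {d : ℕ}
    (ℱ : Filtration ℕ mΩ) (W : ℕ → Ω → Fin d → ℝ)
    (hadapted : ∀ t i, Measurable[ℱ t] fun ω => W t ω i)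
    (hbasis : ∀ t, ∀ᵐ ω ∂μ, ∃ k : Fin d, W t ω = fun j => if j = k then 1 else 0)
    (t : ℕ)
    (hpos : ∀ᵐ ω ∂μ, ∀ i : Fin d, 0 < (μ[fun ω' => W (t + 1) ω' i | ℱ t]) ω)
    (Z Z' : Ω → Fin d → ℝ)
    (hZ : Measurable[ℱ t] Z) (hZ' : Measurable[ℱ t] Z') :
    (∀ᵐ ω ∂μ,
        Z ω ⬝ᵥ (fun i => W (t + 1) ω i - (μ[fun ω' => W (t + 1) ω' i | ℱ t]) ω)
          = Z' ω ⬝ᵥ (fun i => W (t + 1) ω i - (μ[fun ω' => W (t + 1) ω' i | ℱ t]) ω))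
      ↔ (∀ᵐ ω ∂μ, ∃ c : ℝ, ∀ i, Z ω i - Z' ω i = c) := by
  have hm : ℱ t ≤ mΩ := ℱ.le t
  haveI : SigmaFinite (μ.trim hm) := inferInstance
  set P : Fin d → Ω → ℝ := fun i => μ[fun ω' => W (t + 1) ω' i | ℱ t] with hP_def
  -- The conditional probabilities sum to 1 a.e.
  have hsum1 : ∀ᵐ ω ∂μ, ∑ i, P i ω = 1 := by
    have h1 : (fun ω => ∑ i, W (t + 1) ω i) =ᵐ[μ] fun _ => (1 : ℝ) := by
      filter_upwards [hbasis (t + 1)] with ω hω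
      obtain ⟨k, hk⟩ := hω
      rw [hk]
      simp
    have h2 := condExp_finset_sum (μ := μ) (m := ℱ t) (s := Finset.univ)
      (f := fun i ω' => W (t + 1) ω' i) (fun i _ => Integrable.of_finite)
    have h3 : μ[∑ i : Fin d, (fun ω' => W (t + 1) ω' i)|ℱ t]
        =ᵐ[μ] μ[fun _ => (1 : ℝ)|ℱ t] := by
      refine condExp_congr_ae ?_
      refine h1.mono fun ω hω => ?_
      simpa using hω
    have h4 : μ[fun _ => (1 : ℝ)|ℱ t] =ᵐ[μ] fun _ => (1 : ℝ) := by
      rw [condExp_const hm (1 : ℝ)]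
    filter_upwards [h2, h3, h4] with ω hω2 hω3 hω4
    have : (∑ i : Fin d, μ[fun ω' => W (t + 1) ω' i|ℱ t]) ω = 1 := by
      rw [← hω2, hω3, hω4]
    simpa using this
  constructor
  · -- forward direction
    intro h
    -- Y ω i = Z ω i - Z' ω i, S ω = Y ⬝ P
    set Y : Ω → Fin d → ℝ := fun ω i => Z ω i - Z' ω i with hY_def
    set S : Ω → ℝ := fun ω => ∑ i, Y ω i * P i ω with hS_def
    set g : Fin d → Ω → ℝ := fun i ω => Y ω i - S ω with hg_def
    have hYm : ∀ i, Measurable[ℱ t] fun ω => Y ω i := fun i =>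
      ((measurable_pi_apply i).comp hZ).sub ((measurable_pi_apply i).comp hZ')
    have hPm : ∀ i, Measurable[ℱ t] (P i) := fun i => stronglyMeasurable_condExp.measurable
    have hgm : ∀ i, Measurable[ℱ t] (g i) := by
      intro i
      refine (hYm i).sub ?_
      exact Finset.measurable_sum _ fun j _ => (hYm j).mul (hPm j)
    set A : Fin d → Set Ω := fun i => {ω | g i ω ≠ 0} with hA_def
    have hA : ∀ i, MeasurableSet[ℱ t] (A i) := fun i =>
      ((hgm i) (measurableSet_singleton 0)).compl
    -- key pointwise fact
    have hkey : ∀ᵐ ω ∂μ, ∀ i, ω ∈ A i → W (t + 1) ω i = 0 := by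
      filter_upwards [hbasis (t + 1), h] with ω hω hhω
      obtain ⟨k, hk⟩ := hω
      intro i hi
      by_cases hik : i = k
      · subst hik
        exfalso
        apply hi
        have hdot : ∑ j, Y ω j * (W (t + 1) ω j - P j ω) = 0 := by
          have : Z ω ⬝ᵥ (fun j => W (t + 1) ω j - P j ω)
              - Z' ω ⬝ᵥ (fun j => W (t + 1) ω j - P j ω) = 0 := by
            rw [hhω]; ring
          simpa [dotProduct, hY_def, ← Finset.sum_sub_distrib, sub_mul] using this
        have hW : ∀ j, W (t + 1) ω j = if j = i then 1 else 0 := fun j => by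
          rw [hk]
        have hsub : ∑ j, Y ω j * (W (t + 1) ω j - P j ω)
            = Y ω i - S ω := by
          rw [Finset.sum_congr rfl fun j _ => by rw [hW j]]
          simp only [mul_sub, Finset.sum_sub_distrib, hS_def]
          congr 1
          rw [Finset.sum_eq_single i]
          · simp
          · intro j _ hj; simp [hj]
          · simp
        rw [hg_def]
        simp only
        rw [← hsub, hdot]
      · rw [hk]
        simp [hik]
    -- each A i is null
    have hnull : ∀ i, μ (A i) = 0 := by
      intro i
      have hint0 : ∫ ω in A i, W (t + 1) ω i ∂μ = 0 := by
        have h0 : (fun ω => W (t + 1) ω i) =ᵐ[μ.restrict (A i)] fun _ => (0 : ℝ) := by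
          rw [Filter.EventuallyEq, ae_restrict_iff' (hm _ (hA i))]
          filter_upwards [hkey] with ω hω hωA
          exact hω i hωA
        rw [integral_congr_ae h0]
        simp
      have hintP : ∫ ω in A i, P i ω ∂μ = 0 := by
        rw [hP_def]
        rw [setIntegral_condExp hm Integrable.of_finite (hA i)]
        exact hint0
      have hnn : (0 : Ω → ℝ) ≤ᵐ[μ.restrict (A i)] P i := by
        refine ae_restrict_of_ae ?_
        filter_upwards [hpos] with ω hω
        exact le_of_lt (hω i)
      have hzero : P i =ᵐ[μ.restrict (A i)] 0 :=
        (setIntegral_eq_zero_iff_of_nonneg_ae hnn Integrable.of_finite).mp hintP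
      have hposr : ∀ᵐ ω ∂μ.restrict (A i), 0 < P i ω :=
        ae_restrict_of_ae (hpos.mono fun ω hω => hω i)
      have hfalse : ∀ᵐ (_ : Ω) ∂μ.restrict (A i), False := by
        filter_upwards [hzero, hposr] with ω h1 h2
        rw [h1] at h2
        exact lt_irrefl 0 h2
      have : μ.restrict (A i) Set.univ = 0 := by
        have := hfalse
        rw [ae_iff] at this
        simpa using this
      rwa [Measure.restrict_apply_univ] at this
    have hgz : ∀ᵐ ω ∂μ, ∀ i, g i ω = 0 := by
      rw [ae_all_iff]
      intro i
      have := hnull i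
      rw [ae_iff]
      simpa [hA_def] using this
    filter_upwards [hgz] with ω hω
    refine ⟨S ω, fun i => ?_⟩
    have := hω i
    simp only [hg_def, hY_def] at this
    linarith
  · -- reverse direction
    intro h
    filter_upwards [h, hsum1, hbasis (t + 1)] with ω hc hs hb
    obtain ⟨c, hc⟩ := hc
    obtain ⟨k, hk⟩ := hb
    have hsumW : ∑ i, W (t + 1) ω i = 1 := by
      rw [hk]; simp
    have : Z ω ⬝ᵥ (fun i => W (t + 1) ω i - P i ω)
        - Z' ω ⬝ᵥ (fun i => W (t + 1) ω i - P i ω) = 0 := by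
      simp only [dotProduct, ← Finset.sum_sub_distrib, ← sub_mul]
      have : ∀ i, (Z ω i - Z' ω i) * (W (t + 1) ω i - P i ω)
          = c * (W (t + 1) ω i - P i ω) := fun i => by rw [hc i]
      rw [Finset.sum_congr rfl fun i _ => this i, ← Finset.mul_sum,
        Finset.sum_sub_distrib, hsumW, hs]
      ring
    linarith [this]
end

section
/- There exist constants c, C > 0 (depending on the lower bound δ > 0 of the entries of the conditional probability vectors) such that for every F_t-measurable row vector Z_t ∈ R^{1×d}, c·E[|Z_t Ĩ|²] ≤ E[|Z_t M_{t+1}|²] ≤ C·E[|Z_t Ĩ|²]. -/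
open MeasureTheory Matrix Finset

lemma vecMul_Itilde' {n : ℕ} (z : Fin (n+1) → ℝ) (j : Fin n) :
    (z ᵥ* (Matrix.of fun i j => if (i : ℕ) < n then (if (i : ℕ) = (j : ℕ) then 1 else 0) else (-1 : ℝ))) j
      = z j.castSucc - z (Fin.last n) := by
  simp only [Matrix.vecMul, dotProduct, Matrix.of_apply]
  rw [Fin.sum_univ_castSucc]
  simp [Fin.castSucc, Fin.is_lt, Fin.last, mul_ite, Finset.sum_ite_eq']
  simp [Fin.val_eq_val, Finset.sum_ite_eq', sub_eq_add_neg]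

lemma alg_bounds {n : ℕ} {δ : ℝ} (hδ : 0 < δ) (P Z : Fin (n+1) → ℝ)
    (hP : ∀ i, δ ≤ P i) (hsum : ∑ i, P i = 1) :
    δ^2 * (∑ j : Fin n, (Z j.castSucc - Z (Fin.last n))^2)
      ≤ (∑ i, (Z i)^2 * P i) - (∑ i, Z i * P i)^2 ∧
    (∑ i, (Z i)^2 * P i) - (∑ i, Z i * P i)^2
      ≤ ∑ j : Fin n, (Z j.castSucc - Z (Fin.last n))^2 := by
  set a := Z (Fin.last n) with ha
  set Y : Fin (n+1) → ℝ := fun i => Z i - a with hY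
  have hPnn : ∀ i, 0 ≤ P i := fun i => le_trans hδ.le (hP i)
  -- shift invariance
  have hshift : (∑ i, (Z i)^2 * P i) - (∑ i, Z i * P i)^2
      = (∑ i, (Y i)^2 * P i) - (∑ i, Y i * P i)^2 := by
    have e1 : ∑ i, (Y i)^2 * P i
        = (∑ i, (Z i)^2 * P i) - 2*a*(∑ i, Z i * P i) + a^2 * (∑ i, P i) := by
      rw [Finset.mul_sum, Finset.mul_sum, ← Finset.sum_sub_distrib, ← Finset.sum_add_distrib]
      exact Finset.sum_congr rfl fun i _ => by simp only [hY]; ring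
    have e2 : ∑ i, Y i * P i = (∑ i, Z i * P i) - a * (∑ i, P i) := by
      rw [Finset.mul_sum, ← Finset.sum_sub_distrib]
      exact Finset.sum_congr rfl fun i _ => by simp only [hY]; ring
    rw [e1, e2, hsum]; ring
  have hYlast : Y (Fin.last n) = 0 := by simp [hY, ha]
  have eYsum : ∑ i, (Y i)^2 * P i = ∑ j : Fin n, (Y j.castSucc)^2 * P j.castSucc := by
    rw [Fin.sum_univ_castSucc, hYlast]; simp
  have eYsum2 : ∑ i, Y i * P i = ∑ j : Fin n, Y j.castSucc * P j.castSucc := by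
    rw [Fin.sum_univ_castSucc, hYlast]; simp
  have hZYeq : ∀ j : Fin n, Z j.castSucc - a = Y j.castSucc := fun j => rfl
  rw [hshift, eYsum, eYsum2]
  set Q : Fin n → ℝ := fun j => P j.castSucc with hQ
  set V : Fin n → ℝ := fun j => Y j.castSucc with hV
  have hVZ : ∀ j, Z j.castSucc - Z (Fin.last n) = V j := fun j => rfl
  simp only [ha, hVZ]
  have hQnn : ∀ j, 0 ≤ Q j := fun j => hPnn _
  have hQδ : ∀ j, δ ≤ Q j := fun j => hP _
  have hQ1 : ∀ j, Q j ≤ 1 := by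
    intro j
    calc Q j ≤ ∑ i, P i := Finset.single_le_sum (fun i _ => hPnn i) (Finset.mem_univ _)
    _ = 1 := hsum
  have hQsum : ∑ j, Q j ≤ 1 - δ := by
    have : (∑ j, Q j) + P (Fin.last n) = 1 := by
      rw [← hsum, Fin.sum_univ_castSucc]
    have h2 := hP (Fin.last n)
    linarith
  constructor
  · -- lower bound
    have cs : (∑ j, V j * Q j)^2 ≤ (∑ j, Q j) * (∑ j, (V j)^2 * Q j) := by
      have := Finset.sum_mul_sq_le_sq_mul_sq Finset.univ
        (fun j => Real.sqrt (Q j)) (fun j => Real.sqrt (Q j) * V j)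
      calc (∑ j, V j * Q j)^2
          = (∑ j, Real.sqrt (Q j) * (Real.sqrt (Q j) * V j))^2 := by
            congr 1; refine Finset.sum_congr rfl fun j _ => ?_
            rw [← mul_assoc, Real.mul_self_sqrt (hQnn j)]; ring
        _ ≤ (∑ j, Real.sqrt (Q j)^2) * (∑ j, (Real.sqrt (Q j) * V j)^2) := this
        _ = (∑ j, Q j) * (∑ j, (V j)^2 * Q j) := by
            congr 1
            · exact Finset.sum_congr rfl fun j _ => Real.sq_sqrt (hQnn j)
            · refine Finset.sum_congr rfl fun j _ => ?_
              rw [mul_pow, Real.sq_sqrt (hQnn j)]; ring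
    have hT : 0 ≤ ∑ j, (V j)^2 * Q j :=
      Finset.sum_nonneg fun j _ => mul_nonneg (sq_nonneg _) (hQnn j)
    have h1 : (∑ j, V j * Q j)^2 ≤ (1 - δ) * (∑ j, (V j)^2 * Q j) :=
      cs.trans (mul_le_mul_of_nonneg_right hQsum hT)
    have h2 : δ * (δ * ∑ j, (V j)^2) ≤ δ * ∑ j, (V j)^2 * Q j := by
      apply mul_le_mul_of_nonneg_left _ hδ.le
      rw [Finset.mul_sum]
      exact Finset.sum_le_sum fun j _ => by
        have := mul_le_mul_of_nonneg_left (hQδ j) (sq_nonneg (V j))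
        linarith
    nlinarith [Finset.sum_nonneg (fun j (_ : j ∈ Finset.univ) => sq_nonneg (V j))]
  · -- upper bound
    have h1 : ∑ j, (V j)^2 * Q j ≤ ∑ j, (V j)^2 :=
      Finset.sum_le_sum fun j _ => by
        have := mul_le_mul_of_nonneg_left (hQ1 j) (sq_nonneg (V j))
        linarith
    nlinarith [sq_nonneg (∑ j, V j * Q j)]

lemma integral_mul_condexp {Ω : Type*} [mΩ : MeasurableSpace Ω] [Fintype Ω]
    [MeasurableSingletonClass Ω]
    (μ : Measure Ω) [IsProbabilityMeasure μ] {m : MeasurableSpace Ω} (hm : m ≤ mΩ)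
    (h f : Ω → ℝ) (hh : Measurable[m] h) :
    ∫ ω, h ω * (μ[f|m]) ω ∂μ = ∫ ω, h ω * f ω ∂μ := by
  haveI : SigmaFinite (μ.trim hm) := inferInstance
  have hint : Integrable (h * f) μ := .of_finite
  have e : μ[h * f|m] =ᵐ[μ] h * μ[f|m] :=
    condExp_mul_of_stronglyMeasurable_left hh.stronglyMeasurable hint .of_finite
  have e2 : ∫ ω, (h * (μ[f|m])) ω ∂μ = ∫ ω, (μ[h * f|m]) ω ∂μ := integral_congr_ae e.symm
  have e3 : ∫ ω, (μ[h * f|m]) ω ∂μ = ∫ ω, (h * f) ω ∂μ := integral_condExp hm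
  simpa [Pi.mul_apply] using e2.trans e3


/-- The `d × (d-1)` matrix `Ĩ`: identity on top, last row all `-1` (here `d = n + 1`). -/
noncomputable def Itilde (n : ℕ) : Matrix (Fin (n + 1)) (Fin n) ℝ :=
  Matrix.of fun i j => if (i : ℕ) < n then (if (i : ℕ) = (j : ℕ) then 1 else 0) else -1

lemma vecMul_Itilde {n : ℕ} (z : Fin (n+1) → ℝ) (j : Fin n) :
    (z ᵥ* Itilde n) j = z j.castSucc - z (Fin.last n) := vecMul_Itilde' z j

/-- **Norm equivalence.**  There exist constants `c, C > 0` (depending on the lower bound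
`δ > 0` of the entries of the conditional probability vectors) such that for every
`ℱ_t`-measurable row vector `Z_t ∈ ℝ^{1×d}`,
`c·𝔼[|Z_t Ĩ|²] ≤ 𝔼[|Z_t M_{t+1}|²] ≤ C·𝔼[|Z_t Ĩ|²]`,
where `M_{t+1} = W_{t+1} - 𝔼[W_{t+1}|ℱ_t]` and `W` is valued in the standard basis of
`ℝ^d` with all entries of `𝔼[W_{t+1}|ℱ_t]` at least `δ`. -/
theorem seminorm_equivalence
    {Ω : Type*} [mΩ : MeasurableSpace Ω] [Fintype Ω] [MeasurableSingletonClass Ω]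
    (μ : Measure Ω) [IsProbabilityMeasure μ] {n : ℕ}
    (ℱ : Filtration ℕ mΩ) (W : ℕ → Ω → Fin (n + 1) → ℝ)
    (hadapted : ∀ t i, Measurable[ℱ t] fun ω => W t ω i)
    (hbasis : ∀ t, ∀ᵐ ω ∂μ, ∃ k : Fin (n + 1), W t ω = fun j => if j = k then 1 else 0)
    (δ : ℝ) (hδ : 0 < δ)
    (hlow : ∀ t, ∀ᵐ ω ∂μ, ∀ i : Fin (n + 1), δ ≤ (μ[fun ω' => W (t + 1) ω' i | ℱ t]) ω) :
    ∃ c > (0 : ℝ), ∃ C > (0 : ℝ),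
      ∀ (t : ℕ) (Z : Ω → Fin (n + 1) → ℝ), Measurable[ℱ t] Z →
        (c * ∫ ω, (∑ j, ((Z ω ᵥ* Itilde n) j) ^ 2) ∂μ
            ≤ ∫ ω, (Z ω ⬝ᵥ (fun i => W (t + 1) ω i
                - (μ[fun ω' => W (t + 1) ω' i | ℱ t]) ω)) ^ 2 ∂μ) ∧
        (∫ ω, (Z ω ⬝ᵥ (fun i => W (t + 1) ω i
                - (μ[fun ω' => W (t + 1) ω' i | ℱ t]) ω)) ^ 2 ∂μ
            ≤ C * ∫ ω, (∑ j, ((Z ω ᵥ* Itilde n) j) ^ 2) ∂μ) := by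
  refine ⟨δ^2, by positivity, 1, one_pos, ?_⟩
  intro t Z hZ
  have hm : ℱ t ≤ mΩ := ℱ.le t
  haveI : SigmaFinite (μ.trim hm) := inferInstance
  set P : Fin (n+1) → Ω → ℝ := fun i => μ[fun ω' => W (t + 1) ω' i | ℱ t] with hPdef
  have hZi : ∀ i, Measurable[ℱ t] fun ω => Z ω i := fun i => (measurable_pi_apply i).comp hZ
  have hPm : ∀ i, Measurable[ℱ t] (P i) := fun i => stronglyMeasurable_condExp.measurable
  set A : Ω → ℝ := fun ω => ∑ i, Z ω i * W (t+1) ω i with hA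
  set B : Ω → ℝ := fun ω => ∑ i, Z ω i * P i ω with hB
  have hBm : Measurable[ℱ t] B := Finset.measurable_sum _ fun i _ => (hZi i).mul (hPm i)
  -- pointwise rewriting of the dot product
  have hg : ∀ ω, (Z ω ⬝ᵥ (fun i => W (t + 1) ω i
      - (μ[fun ω' => W (t + 1) ω' i | ℱ t]) ω)) = A ω - B ω := by
    intro ω
    simp only [dotProduct, hA, hB, mul_sub, Finset.sum_sub_distrib, hPdef]
  -- the sum of the conditional probabilities is 1 a.e.
  have hsum1 : ∀ᵐ ω ∂μ, ∑ i, P i ω = 1 := by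
    have hae : (fun ω => ∑ i, W (t+1) ω i) =ᵐ[μ] fun _ => (1:ℝ) := by
      filter_upwards [hbasis (t+1)] with ω hk
      obtain ⟨k, hk⟩ := hk
      simp [hk]
    have h1 : μ[fun ω => ∑ i, W (t+1) ω i | ℱ t] =ᵐ[μ] fun _ => (1:ℝ) := by
      refine (condExp_congr_ae hae).trans ?_
      rw [condExp_const hm]
    have h2 : μ[fun ω => ∑ i, W (t+1) ω i | ℱ t] =ᵐ[μ] fun ω => ∑ i, P i ω := by
      have e0 : (fun ω => ∑ i, W (t+1) ω i)
          = ∑ i : Fin (n+1), fun ω' => W (t+1) ω' i := by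
        funext ω; rw [Finset.sum_apply]
      rw [e0]
      refine (condExp_finsetSum (fun i _ => .of_finite) (ℱ t)).trans ?_
      filter_upwards with ω
      rw [Finset.sum_apply]
    filter_upwards [h1, h2] with ω e1 e2
    rw [← e2, e1]
  -- integral identities
  have hA2 : ∫ ω, (A ω)^2 ∂μ = ∫ ω, (∑ i, (Z ω i)^2 * P i ω) ∂μ := by
    have step1 : ∫ ω, (A ω)^2 ∂μ = ∫ ω, (∑ i, (Z ω i)^2 * W (t+1) ω i) ∂μ := by
      apply integral_congr_ae
      filter_upwards [hbasis (t+1)] with ω hk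
      obtain ⟨k, hk⟩ := hk
      simp [hA, hk, mul_ite, Finset.sum_ite_eq']
    rw [step1, integral_finset_sum _ (fun i _ => .of_finite),
      integral_finset_sum _ (fun i _ => .of_finite)]
    refine Finset.sum_congr rfl fun i _ => ?_
    exact (integral_mul_condexp μ hm _ _ ((hZi i).pow_const 2)).symm
  have hAB : ∫ ω, A ω * B ω ∂μ = ∫ ω, (B ω)^2 ∂μ := by
    have e1 : ∀ ω, A ω * B ω = ∑ i, (Z ω i * B ω) * W (t+1) ω i := by
      intro ω; rw [hA, Finset.sum_mul]
      exact Finset.sum_congr rfl fun i _ => by ring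
    have e2 : ∀ ω, (B ω)^2 = ∑ i, (Z ω i * B ω) * P i ω := by
      intro ω
      have hBω : B ω = ∑ i, Z ω i * P i ω := rfl
      rw [pow_two]
      nth_rewrite 1 [hBω]
      rw [Finset.sum_mul]
      exact Finset.sum_congr rfl fun i _ => by ring
    simp_rw [e1, e2]
    rw [integral_finset_sum _ (fun i _ => .of_finite),
      integral_finset_sum _ (fun i _ => .of_finite)]
    refine Finset.sum_congr rfl fun i _ => ?_
    exact (integral_mul_condexp μ hm _ _ ((hZi i).mul hBm)).symm
  have key : ∫ ω, (A ω - B ω)^2 ∂μ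
      = ∫ ω, ((∑ i, (Z ω i)^2 * P i ω) - (B ω)^2) ∂μ := by
    have e : ∀ ω, (A ω - B ω)^2 = (A ω)^2 - (2 * (A ω * B ω) - (B ω)^2) := fun ω => by ring
    simp_rw [e]
    rw [integral_sub .of_finite .of_finite, integral_sub .of_finite .of_finite,
      integral_const_mul, hA2, hAB, integral_sub .of_finite .of_finite]
    ring
  -- pointwise bounds a.e.
  have hbnd : ∀ᵐ ω ∂μ,
      δ^2 * (∑ j, ((Z ω ᵥ* Itilde n) j)^2) ≤ (∑ i, (Z ω i)^2 * P i ω) - (B ω)^2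
      ∧ (∑ i, (Z ω i)^2 * P i ω) - (B ω)^2 ≤ ∑ j, ((Z ω ᵥ* Itilde n) j)^2 := by
    filter_upwards [hlow t, hsum1] with ω h1 h2
    have halg := alg_bounds hδ (fun i => P i ω) (Z ω) h1 h2
    simpa [vecMul_Itilde, hB] using halg
  have goalrw : (∫ ω, (Z ω ⬝ᵥ (fun i => W (t + 1) ω i
      - (μ[fun ω' => W (t + 1) ω' i | ℱ t]) ω)) ^ 2 ∂μ)
      = ∫ ω, ((∑ i, (Z ω i)^2 * P i ω) - (B ω)^2) ∂μ := by
    simp_rw [hg]; exact key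
  constructor
  · rw [goalrw, ← integral_const_mul]
    exact integral_mono_ae .of_finite .of_finite (hbnd.mono fun ω h => h.1)
  · rw [goalrw, one_mul]
    exact integral_mono_ae .of_finite .of_finite (hbnd.mono fun ω h => h.2)
end

section
/- Consider the backward stochastic difference equation Y_t = Y_{t+1} + f(t+1, Y_{t+1}, Z_{t+1}) - Z_t M_{t+1} with terminal condition Y_T = η, where f(T,·,·) does not depend on z and f respects the equivalence relation ∼_M in z. Then there exists an adapted solution (Y, Z), with Y unique and Z unique up to the relation Z ∼_M Z̃ (i.e. Z_t M_{t+1} = Z̃_t M_{t+1} a.s. for all t). -/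
open MeasureTheory Matrix

/-- The martingale difference `M_{t+1} = W_{t+1} - 𝔼[W_{t+1}|ℱ_t]` (componentwise). -/
noncomputable def Mnext {Ω : Type*} [mΩ : MeasurableSpace Ω] (μ : MeasureTheory.Measure Ω)
    {d : ℕ} (ℱ : MeasureTheory.Filtration ℕ mΩ) (W : ℕ → Ω → Fin d → ℝ)
    (t : ℕ) (ω : Ω) : Fin d → ℝ :=
  fun i => W (t + 1) ω i - (μ[fun ω' => W (t + 1) ω' i | ℱ t]) ω

section Atoms
variable {Ω : Type*}

/-- Two points are in the same atom of `m`. -/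
def aeq (m : MeasurableSpace Ω) (ω ω' : Ω) : Prop :=
  ∀ A : Set Ω, MeasurableSet[m] A → ω ∈ A → ω' ∈ A

lemma aeq_refl (m : MeasurableSpace Ω) (ω : Ω) : aeq m ω ω := fun _ _ h => h

lemma aeq_symm {m : MeasurableSpace Ω} {ω ω' : Ω} (h : aeq m ω ω') : aeq m ω' ω := by
  intro A hA hmem
  by_contra hω
  exact h Aᶜ hA.compl hω hmem

lemma aeq_trans {m : MeasurableSpace Ω} {ω₁ ω₂ ω₃ : Ω} (h : aeq m ω₁ ω₂) (h' : aeq m ω₂ ω₃) :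
    aeq m ω₁ ω₃ := fun A hA hm => h' A hA (h A hA hm)

lemma aeq_iff_of_aeq {m : MeasurableSpace Ω} {ω₁ ω₂ : Ω} (h : aeq m ω₁ ω₂) (ω' : Ω) :
    aeq m ω₁ ω' ↔ aeq m ω₂ ω' :=
  ⟨fun h' => aeq_trans (aeq_symm h) h', fun h' => aeq_trans h h'⟩

lemma aeq.eq_of_measurable {β : Type*} [MeasurableSpace β] [MeasurableSingletonClass β]
    {m : MeasurableSpace Ω} {g : Ω → β} (hg : Measurable[m] g) {ω ω' : Ω}
    (h : aeq m ω ω') : g ω = g ω' := by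
  have := h (g ⁻¹' {g ω}) (hg (measurableSet_singleton _)) rfl
  simpa [eq_comm] using this

lemma measurable_of_aeq [Finite Ω] {β : Type*} [MeasurableSpace β] {m : MeasurableSpace Ω}
    {g : Ω → β} (h : ∀ ω ω', aeq m ω ω' → g ω = g ω') : Measurable[m] g := by
  intro S _
  have hset : g ⁻¹' S = ⋃ ω ∈ g ⁻¹' S, ⋂₀ {A : Set Ω | MeasurableSet[m] A ∧ ω ∈ A} := by
    ext x
    constructor
    · intro hx
      exact Set.mem_biUnion hx (fun A hA => hA.2)
    · intro hx
      rcases Set.mem_iUnion₂.1 hx with ⟨ω, hω, hx'⟩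
      have haeq : aeq m ω x := fun A hA hmem => hx' A ⟨hA, hmem⟩
      have : g x = g ω := (h ω x haeq).symm
      simpa [Set.mem_preimage, this] using hω
  rw [hset]
  exact MeasurableSet.biUnion (Set.to_countable _)
    (fun ω _ => MeasurableSet.sInter (Set.to_countable _) (fun A hA => hA.1))

end Atoms

section CexpDef
variable {Ω : Type*} [Fintype Ω]

open Classical in
/-- Explicit conditional expectation numerator. -/
noncomputable def cexpN (m : MeasurableSpace Ω) {mΩ : MeasurableSpace Ω}
    (μ : @MeasureTheory.Measure Ω mΩ) (g : Ω → ℝ) (ω : Ω) : ℝ :=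
  ∑ ω', if aeq m ω ω' then g ω' * (μ {ω'}).toReal else 0

open Classical in
/-- Explicit conditional expectation denominator (mass of the atom). -/
noncomputable def cexpD (m : MeasurableSpace Ω) {mΩ : MeasurableSpace Ω}
    (μ : @MeasureTheory.Measure Ω mΩ) (ω : Ω) : ℝ :=
  ∑ ω', if aeq m ω ω' then (μ {ω'}).toReal else 0

/-- Explicit conditional expectation on a finite space. -/
noncomputable def cexp (m : MeasurableSpace Ω) {mΩ : MeasurableSpace Ω}
    (μ : @MeasureTheory.Measure Ω mΩ) (g : Ω → ℝ) (ω : Ω) : ℝ :=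
  cexpN m μ g ω / cexpD m μ ω

end CexpDef

section CexpLemmas
variable {Ω : Type*} [Fintype Ω] {m : MeasurableSpace Ω} [mΩ : MeasurableSpace Ω]
variable {μ : Measure Ω} {g h : Ω → ℝ} {ω ω' : Ω}

lemma cexpN_congr_class (hae : aeq m ω ω') (g : Ω → ℝ) :
    cexpN m μ g ω = cexpN m μ g ω' := by
  classical
  unfold cexpN
  refine Finset.sum_congr rfl fun x _ => ?_
  rw [aeq_iff_of_aeq hae]

lemma cexpD_congr_class (hae : aeq m ω ω') : cexpD m μ ω = cexpD m μ ω' := by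
  classical
  unfold cexpD
  refine Finset.sum_congr rfl fun x _ => ?_
  rw [aeq_iff_of_aeq hae]

lemma cexp_congr_class (hae : aeq m ω ω') (g : Ω → ℝ) :
    cexp m μ g ω = cexp m μ g ω' := by
  unfold cexp; rw [cexpN_congr_class hae, cexpD_congr_class hae]

lemma measurable_cexp : Measurable[m] (cexp m μ g) :=
  measurable_of_aeq (fun _ _ hae => cexp_congr_class hae g)

lemma cexpD_pos [IsFiniteMeasure μ] (hω : μ {ω} ≠ 0) : 0 < cexpD m μ ω := by
  classical
  have h1 : 0 < (μ {ω}).toReal := ENNReal.toReal_pos hω (measure_ne_top _ _)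
  have h2 : (if aeq m ω ω then (μ {ω}).toReal else 0) ≤ cexpD m μ ω := by
    refine Finset.single_le_sum (f := fun ω' => if aeq m ω ω' then (μ {ω'}).toReal else 0)
      (fun x _ => ?_) (Finset.mem_univ ω)
    positivity
  rw [if_pos (aeq_refl m ω)] at h2
  linarith

lemma cexpN_congr_support (hgh : ∀ x, μ {x} ≠ 0 → g x = h x) :
    cexpN m μ g ω = cexpN m μ h ω := by
  classical
  refine Finset.sum_congr rfl fun x _ => ?_
  by_cases hx : μ {x} = 0
  · simp [hx]
  · rw [hgh x hx]

lemma cexp_congr_support (hgh : ∀ x, μ {x} ≠ 0 → g x = h x) :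
    cexp m μ g ω = cexp m μ h ω := by
  unfold cexp; rw [cexpN_congr_support hgh]

lemma cexpN_sum {ι : Type*} (s : Finset ι) (F : ι → Ω → ℝ) :
    cexpN m μ (fun x => ∑ j ∈ s, F j x) ω = ∑ j ∈ s, cexpN m μ (F j) ω := by
  classical
  unfold cexpN
  rw [Finset.sum_comm]
  refine Finset.sum_congr rfl fun x _ => ?_
  by_cases hx : aeq m ω x
  · simp [hx, Finset.sum_mul]
  · simp [hx]

lemma cexp_sum {ι : Type*} (s : Finset ι) (F : ι → Ω → ℝ) :
    cexp m μ (fun x => ∑ j ∈ s, F j x) ω = ∑ j ∈ s, cexp m μ (F j) ω := by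
  unfold cexp
  rw [cexpN_sum, Finset.sum_div]

lemma cexpN_sub : cexpN m μ (fun x => g x - h x) ω = cexpN m μ g ω - cexpN m μ h ω := by
  classical
  unfold cexpN
  rw [← Finset.sum_sub_distrib]
  refine Finset.sum_congr rfl fun x _ => ?_
  by_cases hx : aeq m ω x <;> simp [hx, sub_mul]

lemma cexp_sub : cexp m μ (fun x => g x - h x) ω = cexp m μ g ω - cexp m μ h ω := by
  unfold cexp; rw [cexpN_sub, sub_div]

/-- Pull-out property: a factor constant on the atom of `ω` can be pulled out. -/
lemma cexp_mul_const {c : Ω → ℝ} (hc : ∀ x, aeq m ω x → c x = c ω) :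
    cexp m μ (fun x => c x * g x) ω = c ω * cexp m μ g ω := by
  classical
  unfold cexp cexpN
  rw [← mul_div_assoc, Finset.mul_sum]
  rw [eq_comm]
  congr 1
  refine Finset.sum_congr rfl fun x _ => ?_
  by_cases hx : aeq m ω x
  · simp only [if_pos hx, hc x hx]; ring
  · simp [hx]

lemma cexp_of_const [IsFiniteMeasure μ] {c : Ω → ℝ} (hc : ∀ x, aeq m ω x → c x = c ω)
    (hω : μ {ω} ≠ 0) : cexp m μ c ω = c ω := by
  have h1 : cexp m μ (fun x => c x * (1 : ℝ)) ω = c ω * cexp m μ (fun _ => (1 : ℝ)) ω :=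
    cexp_mul_const hc
  have h2 : cexp m μ (fun _ => (1 : ℝ)) ω = 1 := by
    classical
    unfold cexp cexpN
    simp only [one_mul]
    exact div_self (ne_of_gt (cexpD_pos hω))
  simp only [mul_one] at h1
  rw [h1, h2, mul_one]

/-- Key representation step. -/
lemma cexp_mul_eq_of_const_on {X u : Ω → ℝ}
    (hX : ∀ x, μ {x} ≠ 0 → aeq m ω x → u x ≠ 0 → X x = X ω) :
    cexp m μ (fun x => X x * u x) ω = X ω * cexp m μ u ω := by
  classical
  unfold cexp cexpN
  rw [← mul_div_assoc, Finset.mul_sum]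
  rw [eq_comm]
  congr 1
  refine Finset.sum_congr rfl fun x _ => ?_
  by_cases hx : aeq m ω x
  · simp only [if_pos hx]
    by_cases hmu : μ {x} = 0
    · simp [hmu]
    · by_cases hu : u x = 0
      · simp [hu]
      · simp only [hX x hmu hx hu]; ring
  · simp [hx]

end CexpLemmas

section AE
variable {Ω : Type*} [Fintype Ω] [mΩ : MeasurableSpace Ω] [MeasurableSingletonClass Ω]
variable {μ : Measure Ω}

lemma ae_iff_support {P : Ω → Prop} : (∀ᵐ ω ∂μ, P ω) ↔ ∀ ω, μ {ω} ≠ 0 → P ω := by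
  rw [MeasureTheory.ae_iff]
  constructor
  · intro h ω hω
    by_contra hP
    exact hω (measure_mono_null (by simpa using hP) h)
  · intro h
    have hsub : {a | ¬P a} ⊆ ⋃ ω ∈ {ω : Ω | ¬ P ω}, {ω} := by
      intro x hx; exact Set.mem_biUnion hx rfl
    refine measure_mono_null hsub ?_
    rw [measure_biUnion_null_iff (Set.to_countable _)]
    intro ω hω
    by_contra h0
    exact hω (h ω h0)

end AE

section Bridge
variable {Ω : Type*} [Fintype Ω] {m : MeasurableSpace Ω} [mΩ : MeasurableSpace Ω]
  [MeasurableSingletonClass Ω] {μ : Measure Ω} [IsFiniteMeasure μ] {g : Ω → ℝ}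

open Classical in
lemma sum_cexp_eq {s : Set Ω} (hs : MeasurableSet[m] s) (g : Ω → ℝ) :
    ∑ x, (μ {x}).toReal * (if x ∈ s then cexp m μ g x else 0)
      = ∑ x, (μ {x}).toReal * (if x ∈ s then g x else 0) := by
  classical
  have step1 : ∀ x, (μ {x}).toReal * (if x ∈ s then cexp m μ g x else 0)
      = ∑ ω', (if x ∈ s ∧ aeq m x ω'
          then g ω' * (μ {ω'}).toReal * (μ {x}).toReal / cexpD m μ x else 0) := by
    intro x
    by_cases hx : x ∈ s
    · rw [if_pos hx, mul_comm]
      unfold cexp cexpN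
      rw [div_mul_eq_mul_div, Finset.sum_mul, Finset.sum_div]
      refine Finset.sum_congr rfl fun ω' _ => ?_
      by_cases hax : aeq m x ω'
      · rw [if_pos hax, if_pos ⟨hx, hax⟩]
      · rw [if_neg hax, if_neg (by tauto), zero_mul, zero_div]
    · rw [if_neg hx, mul_zero]
      rw [eq_comm]
      refine Finset.sum_eq_zero fun ω' _ => ?_
      rw [if_neg (by tauto)]
  rw [Finset.sum_congr rfl (fun x _ => step1 x), Finset.sum_comm]
  refine Finset.sum_congr rfl fun ω' _ => ?_
  by_cases hμ : μ {ω'} = 0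
  · simp [hμ]
  · by_cases hmem : ω' ∈ s
    · rw [if_pos hmem]
      have hD : cexpD m μ ω' ≠ 0 := ne_of_gt (cexpD_pos hμ)
      have hterm : ∀ x, (if x ∈ s ∧ aeq m x ω'
            then g ω' * (μ {ω'}).toReal * (μ {x}).toReal / cexpD m μ x else 0)
          = g ω' * (μ {ω'}).toReal / cexpD m μ ω'
              * (if aeq m ω' x then (μ {x}).toReal else 0) := by
        intro x
        by_cases hax : aeq m x ω'
        · have hxs : x ∈ s := by
            by_contra hxs
            exact hxs ((aeq_symm hax) s hs hmem)
          rw [if_pos ⟨hxs, hax⟩, if_pos (aeq_symm hax), cexpD_congr_class hax]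
          ring
        · have h2 : ¬ aeq m ω' x := fun h => hax (aeq_symm h)
          rw [if_neg (by tauto), if_neg h2, mul_zero]
      rw [Finset.sum_congr rfl (fun x _ => hterm x), ← Finset.mul_sum]
      have hDD : ∑ x, (if aeq m ω' x then (μ {x}).toReal else 0) = cexpD m μ ω' := by
        unfold cexpD; rfl
      rw [hDD, div_mul_cancel₀ _ hD, mul_comm]
    · rw [if_neg hmem, mul_zero]
      refine Finset.sum_eq_zero fun x _ => ?_
      rw [if_neg]
      rintro ⟨hxs, hax⟩
      exact hmem (hax s hs hxs)

lemma cexp_ae_eq_condexp (hm : m ≤ mΩ) (g : Ω → ℝ) :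
    cexp m μ g =ᵐ[μ] μ[g|m] := by
  classical
  refine ae_eq_condExp_of_forall_setIntegral_eq hm (Integrable.of_finite)
    (fun s _ _ => Integrable.of_finite.integrableOn) ?_
    (StronglyMeasurable.aestronglyMeasurable
      ((measurable_cexp (g := g)).stronglyMeasurable))
  intro s hs _
  have hsm : MeasurableSet[mΩ] s := hm s hs
  rw [← integral_indicator hsm, ← integral_indicator hsm,
    integral_fintype Integrable.of_finite, integral_fintype Integrable.of_finite]
  simp only [smul_eq_mul, Set.indicator_apply, measureReal_def]
  exact sum_cexp_eq hs g

end Bridge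

section FiltrationAtoms
variable {Ω : Type*} [mΩ : MeasurableSpace Ω] {d : ℕ}

lemma aeq_filtration_iff (ℱ : Filtration ℕ mΩ) (W : ℕ → Ω → Fin d → ℝ)
    (hadapted : ∀ t i, Measurable[ℱ t] fun ω => W t ω i)
    (hgen : ∀ t : ℕ, (ℱ t : MeasurableSpace Ω)
      = ⨆ s ∈ Set.Iic t, MeasurableSpace.comap (W s) inferInstance)
    (t : ℕ) (x y : Ω) : aeq (ℱ t) x y ↔ ∀ s ≤ t, W s x = W s y := by
  constructor
  · intro h s hs
    have hW : Measurable[ℱ t] (W s) := by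
      have h1 : Measurable[ℱ s] (W s) :=
        (@measurable_pi_iff Ω (Fin d) (fun _ => ℝ) (ℱ s) _ (W s)).mpr (hadapted s)
      exact h1.mono (ℱ.mono hs) le_rfl
    exact aeq.eq_of_measurable hW h
  · intro h A hA hx
    set Φ : Ω → (ℕ → Fin d → ℝ) := fun ω s => W (min s t) ω with hΦ
    have hle : (ℱ t : MeasurableSpace Ω) ≤ MeasurableSpace.comap Φ inferInstance := by
      rw [hgen t]
      refine iSup₂_le fun s hs => ?_
      have hWs : W s = (fun v : ℕ → Fin d → ℝ => v s) ∘ Φ := by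
        funext ω; simp [hΦ, min_eq_left (Set.mem_Iic.mp hs)]
    -- comap (W s) = (inst.comap (eval s)).comap Φ ≤ inst.comap Φ
      rw [hWs, Function.comp_def]
      rw [show (MeasurableSpace.comap (fun ω => Φ ω s) (inferInstance : MeasurableSpace (Fin d → ℝ)))
          = MeasurableSpace.comap ((fun v : ℕ → Fin d → ℝ => v s) ∘ Φ) inferInstance from rfl]
      rw [← MeasurableSpace.comap_comp]
      exact MeasurableSpace.comap_mono (measurable_pi_apply s).comap_le
    obtain ⟨B, -, hB⟩ := hle A hA
    have hxy : Φ x = Φ y := by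
      funext s
      exact h (min s t) (min_le_right s t)
    rw [← hB] at hx ⊢
    show Φ y ∈ B
    rw [← hxy]
    exact hx

end FiltrationAtoms

/-- Backward recursion for the BSΔE solution: `bsdeAux ... s` is the pair `(Y, Z)` at
time `T - s`. -/
noncomputable def bsdeAux {Ω : Type*} [mΩ : MeasurableSpace Ω] [Fintype Ω] {d n : ℕ}
    (μ : Measure Ω) (T : ℕ) (ℱ : Filtration ℕ mΩ) (W : ℕ → Ω → Fin d → ℝ)
    (η : Ω → Fin n → ℝ)
    (f : ℕ → Ω → (Fin n → ℝ) → Matrix (Fin n) (Fin d) ℝ → Fin n → ℝ) :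
    ℕ → ((Ω → Fin n → ℝ) × (Ω → Matrix (Fin n) (Fin d) ℝ))
  | 0 => (η, fun _ => 0)
  | (s + 1) =>
      (fun ω i => cexp (ℱ (T - (s+1))) μ
          (fun z => (bsdeAux μ T ℱ W η f s).1 z i
            + f (T - (s+1) + 1) z ((bsdeAux μ T ℱ W η f s).1 z) ((bsdeAux μ T ℱ W η f s).2 z) i) ω,
       fun ω i j => cexp (ℱ (T - (s+1))) μ
          (fun z => ((bsdeAux μ T ℱ W η f s).1 z i
            + f (T - (s+1) + 1) z ((bsdeAux μ T ℱ W η f s).1 z) ((bsdeAux μ T ℱ W η f s).2 z) i)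
            * W (T - (s+1) + 1) z j) ω
        / cexp (ℱ (T - (s+1))) μ (fun z => W (T - (s+1) + 1) z j) ω)

/-- **Existence and uniqueness for the BSΔE**
`Y_t = Y_{t+1} + f(t+1, Y_{t+1}, Z_{t+1}) - Z_t M_{t+1}`, `Y_T = η`, on a finite filtered
probability space generated by a basis-vector-valued process `W` with
`𝔼[W_{t+1}|ℱ_t] > 0` componentwise.  The driver `f(T,·,·)` does not depend on `z` and `f`
respects the equivalence relation `∼_M` in `z`.  There exists an adapted solution `(Y, Z)`,
with `Y` unique and `Z` unique up to `Z ∼_M Z̃` (i.e. `Z_t M_{t+1} = Z̃_t M_{t+1}` a.s.). -/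
theorem bsde_existence_uniqueness
    {Ω : Type*} [mΩ : MeasurableSpace Ω] [Fintype Ω] [MeasurableSingletonClass Ω]
    (μ : Measure Ω) [IsProbabilityMeasure μ] {d n : ℕ} (T : ℕ)
    (ℱ : Filtration ℕ mΩ) (W : ℕ → Ω → Fin d → ℝ)
    (hadapted : ∀ t i, Measurable[ℱ t] fun ω => W t ω i)
    (hgen : ∀ t : ℕ, (ℱ t : MeasurableSpace Ω)
      = ⨆ s ∈ Set.Iic t, MeasurableSpace.comap (W s) inferInstance)
    (hbasis : ∀ t, ∀ᵐ ω ∂μ, ∃ k : Fin d, W t ω = fun j => if j = k then 1 else 0)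
    (hpos : ∀ t, ∀ᵐ ω ∂μ, ∀ i : Fin d, 0 < (μ[fun ω' => W (t + 1) ω' i | ℱ t]) ω)
    (η : Ω → Fin n → ℝ) (hη : Measurable[ℱ T] η)
    (f : ℕ → Ω → (Fin n → ℝ) → Matrix (Fin n) (Fin d) ℝ → Fin n → ℝ)
    (hf_adapted : ∀ t y z, Measurable[ℱ t] fun ω => f t ω y z)
    -- A1: `f` respects the equivalence relation `∼_M` in `z`
    (hf_inv : ∀ t ≤ T, ∀ (y : Fin n → ℝ) (Z₁ Z₂ : Ω → Matrix (Fin n) (Fin d) ℝ),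
      (∀ i j, Measurable[ℱ t] fun ω => Z₁ ω i j) → (∀ i j, Measurable[ℱ t] fun ω => Z₂ ω i j) →
      (∀ᵐ ω ∂μ, (Z₁ ω) *ᵥ Mnext μ ℱ W t ω = (Z₂ ω) *ᵥ Mnext μ ℱ W t ω) →
      ∀ᵐ ω ∂μ, f t ω y (Z₁ ω) = f t ω y (Z₂ ω))
    -- A2: `f(T, y, z)` is independent of `z`
    (hfT : ∀ ω y z₁ z₂, f T ω y z₁ = f T ω y z₂) :
    ∃ (Y : ℕ → Ω → Fin n → ℝ) (Z : ℕ → Ω → Matrix (Fin n) (Fin d) ℝ),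
      (∀ t ≤ T, Measurable[ℱ t] (Y t)) ∧ (∀ t < T, ∀ i j, Measurable[ℱ t] fun ω => Z t ω i j) ∧
      (∀ᵐ ω ∂μ, Y T ω = η ω) ∧
      (∀ t < T, ∀ᵐ ω ∂μ,
        Y t ω = Y (t + 1) ω + f (t + 1) ω (Y (t + 1) ω) (Z (t + 1) ω)
                  - (Z t ω) *ᵥ Mnext μ ℱ W t ω) ∧
      -- uniqueness: `Y` unique, `Z` unique up to `∼_M`
      (∀ (Y' : ℕ → Ω → Fin n → ℝ) (Z' : ℕ → Ω → Matrix (Fin n) (Fin d) ℝ),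
        (∀ t ≤ T, Measurable[ℱ t] (Y' t)) → (∀ t < T, ∀ i j, Measurable[ℱ t] fun ω => Z' t ω i j) →
        (∀ᵐ ω ∂μ, Y' T ω = η ω) →
        (∀ t < T, ∀ᵐ ω ∂μ,
          Y' t ω = Y' (t + 1) ω + f (t + 1) ω (Y' (t + 1) ω) (Z' (t + 1) ω)
                    - (Z' t ω) *ᵥ Mnext μ ℱ W t ω) →
        (∀ t ≤ T, ∀ᵐ ω ∂μ, Y' t ω = Y t ω) ∧
        (∀ t < T, ∀ᵐ ω ∂μ,
          (Z' t ω) *ᵥ Mnext μ ℱ W t ω = (Z t ω) *ᵥ Mnext μ ℱ W t ω)) := by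
  classical
  set F := bsdeAux μ T ℱ W η f with hFdef
  set q : ℕ → Fin d → Ω → ℝ := fun t j => cexp (ℱ t) μ (fun z => W (t + 1) z j) with hqdef
  -- support-pointwise facts
  have hbasis' : ∀ t x, μ {x} ≠ 0 → ∃ k : Fin d, W t x = fun j => if j = k then 1 else 0 :=
    fun t => ae_iff_support.1 (hbasis t)
  have hq : ∀ t j x, μ {x} ≠ 0 → (μ[fun ω' => W (t + 1) ω' j | ℱ t]) x = q t j x := by
    intro t j x hx
    simp only [hqdef]
    exact (ae_iff_support.1 (cexp_ae_eq_condexp (ℱ.le t) _) x hx).symm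
  have hqpos : ∀ t j x, μ {x} ≠ 0 → 0 < q t j x := fun t j x hx => by
    rw [← hq t j x hx]; exact ae_iff_support.1 (hpos t) x hx j
  have haeq : ∀ t (x y : Ω), aeq (ℱ t) x y ↔ ∀ s ≤ t, W s x = W s y :=
    fun t => aeq_filtration_iff ℱ W hadapted hgen t
  have hstep : ∀ t x y, aeq (ℱ t) x y → W (t+1) x = W (t+1) y → aeq (ℱ (t+1)) x y := by
    intro t x y h1 h2
    rw [haeq]
    intro s hs
    by_cases hst : s ≤ t
    · exact (haeq t x y).1 h1 s hst
    · have hs1 : s = t + 1 := by omega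
      subst hs1; exact h2
  have hMx : ∀ t x, μ {x} ≠ 0 → ∀ j, Mnext μ ℱ W t x j = W (t+1) x j - q t j x := by
    intro t x hx j
    show W (t + 1) x j - (μ[fun ω' => W (t + 1) ω' j | ℱ t]) x = _
    rw [hq t j x hx]
  -- constancy on atoms
  have hconst : ∀ t, t ≤ T → ∀ x y, aeq (ℱ t) x y →
      (F (T - t)).1 x = (F (T - t)).1 y ∧ (F (T - t)).2 x = (F (T - t)).2 y := by
    intro t ht x y hxy
    rcases eq_or_lt_of_le ht with h|h
    · subst h
      rw [Nat.sub_self]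
      exact ⟨aeq.eq_of_measurable hη hxy, rfl⟩
    · have h1 : T - t = (T - (t+1)) + 1 := by omega
      rw [hFdef, h1]
      simp only [bsdeAux]
      have h2 : T - (T - (t+1) + 1) = t := by omega
      rw [h2]
      constructor
      · funext i
        exact cexp_congr_class hxy _
      · funext i j
        rw [cexp_congr_class hxy, cexp_congr_class hxy]
  -- explicit formulas
  have hYdef : ∀ t, t < T → ∀ x i, (F (T - t)).1 x i =
      cexp (ℱ t) μ (fun z => (F (T - (t+1))).1 z i
        + f (t+1) z ((F (T - (t+1))).1 z) ((F (T - (t+1))).2 z) i) x := by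
    intro t ht x i
    have h1 : T - t = (T - (t+1)) + 1 := by omega
    have h2 : T - ((T - (t+1)) + 1) = t := by omega
    rw [hFdef, h1]
    simp only [bsdeAux]
    rw [h2]
  have hZdef : ∀ t, t < T → ∀ x i j, (F (T - t)).2 x i j =
      cexp (ℱ t) μ (fun z => ((F (T - (t+1))).1 z i
        + f (t+1) z ((F (T - (t+1))).1 z) ((F (T - (t+1))).2 z) i) * W (t+1) z j) x
      / q t j x := by
    intro t ht x i j
    have h1 : T - t = (T - (t+1)) + 1 := by omega
    have h2 : T - ((T - (t+1)) + 1) = t := by omega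
    rw [hFdef, h1]
    simp only [bsdeAux]
    rw [h2]
  have hXconst : ∀ t, t < T → ∀ x y, aeq (ℱ (t+1)) x y → ∀ i,
      (F (T - (t+1))).1 x i + f (t+1) x ((F (T - (t+1))).1 x) ((F (T - (t+1))).2 x) i
      = (F (T - (t+1))).1 y i + f (t+1) y ((F (T - (t+1))).1 y) ((F (T - (t+1))).2 y) i := by
    intro t ht x y hxy i
    obtain ⟨h1, h2⟩ := hconst (t+1) ht x y hxy
    have h3 := aeq.eq_of_measurable
      (hf_adapted (t+1) ((F (T - (t+1))).1 y) ((F (T - (t+1))).2 y)) hxy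
    rw [h1, h2, h3]
  -- the main pointwise equation
  have hmain : ∀ t, t < T → ∀ x, μ {x} ≠ 0 →
      (F (T - t)).1 x = (F (T - (t+1))).1 x
        + f (t+1) x ((F (T - (t+1))).1 x) ((F (T - (t+1))).2 x)
        - (F (T - t)).2 x *ᵥ Mnext μ ℱ W t x := by
    intro t ht x hx
    obtain ⟨k, hk⟩ := hbasis' (t+1) x hx
    funext i
    simp only [Pi.add_apply, Pi.sub_apply, Matrix.mulVec, dotProduct]
    have hXc : ∀ z, μ {z} ≠ 0 → aeq (ℱ t) x z → W (t+1) z k ≠ 0 →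
        ((F (T - (t+1))).1 z i + f (t+1) z ((F (T - (t+1))).1 z) ((F (T - (t+1))).2 z) i)
        = ((F (T - (t+1))).1 x i + f (t+1) x ((F (T - (t+1))).1 x) ((F (T - (t+1))).2 x) i) := by
      intro z hz haz hWz
      obtain ⟨k', hk'⟩ := hbasis' (t+1) z hz
      have hkk : k' = k := by
        by_contra hne
        apply hWz
        rw [hk']
        simp only [ite_eq_right_iff]
        intro hkk'
        exact absurd hkk'.symm hne
      have hWW : W (t+1) z = W (t+1) x := by rw [hk, hk', hkk]
      exact hXconst t ht z x (aeq_symm (hstep t x z haz hWW.symm)) i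
    have hsum1 : ∑ j, (F (T - t)).2 x i j * W (t+1) x j
        = (F (T - (t+1))).1 x i + f (t+1) x ((F (T - (t+1))).1 x) ((F (T - (t+1))).2 x) i := by
      rw [Finset.sum_eq_single k]
      · rw [hZdef t ht x i k]
        have hce : cexp (ℱ t) μ (fun z => ((F (T - (t+1))).1 z i
              + f (t+1) z ((F (T - (t+1))).1 z) ((F (T - (t+1))).2 z) i) * W (t+1) z k) x
            = ((F (T - (t+1))).1 x i
              + f (t+1) x ((F (T - (t+1))).1 x) ((F (T - (t+1))).2 x) i) * q t k x := by
          simp only [hqdef]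
          exact cexp_mul_eq_of_const_on hXc
        have hk1 : W (t+1) x k = 1 := by rw [hk]; simp
        rw [hk1, mul_one, hce, mul_div_assoc, div_self (ne_of_gt (hqpos t k x hx)), mul_one]
      · intro j _ hj
        have : W (t+1) x j = 0 := by rw [hk]; simp [hj]
        rw [this, mul_zero]
      · intro hmem
        exact absurd (Finset.mem_univ k) hmem
    have hsum2 : ∑ j, (F (T - t)).2 x i j * q t j x
        = cexp (ℱ t) μ (fun z => (F (T - (t+1))).1 z i
            + f (t+1) z ((F (T - (t+1))).1 z) ((F (T - (t+1))).2 z) i) x := by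
      have hterm : ∀ j, (F (T - t)).2 x i j * q t j x
          = cexp (ℱ t) μ (fun z => ((F (T - (t+1))).1 z i
              + f (t+1) z ((F (T - (t+1))).1 z) ((F (T - (t+1))).2 z) i) * W (t+1) z j) x := by
        intro j
        rw [hZdef t ht x i j, div_mul_cancel₀ _ (ne_of_gt (hqpos t j x hx))]
      rw [Finset.sum_congr rfl (fun j _ => hterm j), ← cexp_sum]
      refine cexp_congr_support (fun z hz => ?_)
      obtain ⟨k', hk'⟩ := hbasis' (t+1) z hz
      rw [← Finset.mul_sum, hk']
      simp
    have hexp : ∑ j, (F (T - t)).2 x i j * Mnext μ ℱ W t x j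
        = ((F (T - (t+1))).1 x i + f (t+1) x ((F (T - (t+1))).1 x) ((F (T - (t+1))).2 x) i)
          - cexp (ℱ t) μ (fun z => (F (T - (t+1))).1 z i
            + f (t+1) z ((F (T - (t+1))).1 z) ((F (T - (t+1))).2 z) i) x := by
      rw [Finset.sum_congr rfl (fun j _ => by rw [hMx t x hx j, mul_sub]),
        Finset.sum_sub_distrib, hsum1, hsum2]
    rw [hexp, hYdef t ht x i]
    ring
  -- measurability of the construction
  have hYmeas : ∀ t, t ≤ T → Measurable[ℱ t] (F (T - t)).1 :=
    fun t ht => measurable_of_aeq (fun x y hxy => (hconst t ht x y hxy).1)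
  have hZmeas : ∀ t, t < T → ∀ i j, Measurable[ℱ t] fun ω => (F (T - t)).2 ω i j :=
    fun t ht i j => measurable_of_aeq (fun x y hxy =>
      congrFun (congrFun ((hconst t (le_of_lt ht) x y hxy).2) i) j)
  refine ⟨fun t => (F (T - t)).1, fun t => (F (T - t)).2, hYmeas, hZmeas, ?_, ?_, ?_⟩
  · refine Filter.Eventually.of_forall (fun x => ?_)
    show (F (T - T)).1 x = η x
    rw [Nat.sub_self]
    rfl
  · intro t ht
    rw [ae_iff_support]
    intro x hx
    exact hmain t ht x hx
  · -- uniqueness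
    intro Y' Z' hY'm hZ'm hY'T hY'eq
    have main : ∀ k t, t ≤ T → T - t ≤ k →
        (∀ᵐ x ∂μ, Y' t x = (F (T - t)).1 x) ∧
        (t < T → ∀ᵐ x ∂μ, Z' t x *ᵥ Mnext μ ℱ W t x = (F (T - t)).2 x *ᵥ Mnext μ ℱ W t x) := by
      intro k
      induction k with
      | zero =>
        intro t ht hk
        have htT : t = T := by omega
        constructor
        · filter_upwards [hY'T] with x hx
          rw [htT, hx, Nat.sub_self]
          rfl
        · intro h
          exact absurd h (by omega)
      | succ k ih =>
        intro t htT hk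
        rcases eq_or_lt_of_le htT with htT'|ht
        · constructor
          · filter_upwards [hY'T] with x hx
            rw [htT', hx, Nat.sub_self]
            rfl
          · intro h
            exact absurd h (by omega)
        · obtain ⟨ihY, ihZ⟩ := ih (t+1) ht (by omega)
          -- the driver terms agree a.e.
          have hFe : ∀ᵐ x ∂μ, f (t+1) x (Y' (t+1) x) (Z' (t+1) x)
              = f (t+1) x ((F (T - (t+1))).1 x) ((F (T - (t+1))).2 x) := by
            rcases eq_or_lt_of_le (show t+1 ≤ T from ht) with hT1|hT1
            · filter_upwards [ihY] with x hx
              rw [hx, hT1]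
              exact hfT x _ _ _
            · have hZe := ihZ hT1
              have hall : ∀ᵐ x ∂μ, ∀ x₀ : Ω,
                  f (t+1) x ((F (T - (t+1))).1 x₀) (Z' (t+1) x)
                  = f (t+1) x ((F (T - (t+1))).1 x₀) ((F (T - (t+1))).2 x) :=
                MeasureTheory.ae_all_iff.2 (fun x₀ => hf_inv (t+1) (le_of_lt hT1)
                  ((F (T - (t+1))).1 x₀) (Z' (t+1)) (fun ω => (F (T - (t+1))).2 ω)
                  (hZ'm (t+1) hT1) (hZmeas (t+1) hT1) hZe)
              filter_upwards [ihY, hall] with x hx1 hx2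
              rw [hx1]
              exact hx2 x
          have hEq' := hY'eq t ht
          have hYe : ∀ᵐ x ∂μ, Y' t x = (F (T - t)).1 x := by
            rw [ae_iff_support]
            intro x hx
            funext i
            have hc : ∀ z, aeq (ℱ t) x z → Y' t z i = Y' t x i := fun z hz =>
              (congrFun (aeq.eq_of_measurable (hY'm t (le_of_lt ht)) hz) i).symm
            have h0 : Y' t x i = cexp (ℱ t) μ (fun z => Y' t z i) x :=
              (cexp_of_const hc hx).symm
            rw [h0]
            have hre : ∀ z, μ {z} ≠ 0 → Y' t z i
                = (Y' (t+1) z i + f (t+1) z (Y' (t+1) z) (Z' (t+1) z) i)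
                  - ∑ j, Z' t z i j * (W (t+1) z j - q t j z) := by
              intro z hz
              have h1 := congrFun (ae_iff_support.1 hEq' z hz) i
              simp only [Pi.add_apply, Pi.sub_apply, Matrix.mulVec, dotProduct] at h1
              rw [h1]
              congr 1
              refine Finset.sum_congr rfl (fun j _ => ?_)
              rw [hMx t z hz j]
            rw [cexp_congr_support hre, cexp_sub]
            have hA : cexp (ℱ t) μ
                (fun z => Y' (t+1) z i + f (t+1) z (Y' (t+1) z) (Z' (t+1) z) i) x
                = (F (T - t)).1 x i := by
              rw [hYdef t ht x i]
              refine cexp_congr_support (fun z hz => ?_)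
              have e1 := ae_iff_support.1 ihY z hz
              have e2 := ae_iff_support.1 hFe z hz
              rw [congrFun e2 i, congrFun e1 i]
            have hB : cexp (ℱ t) μ
                (fun z => ∑ j, Z' t z i j * (W (t+1) z j - q t j z)) x = 0 := by
              rw [cexp_sum]
              refine Finset.sum_eq_zero (fun j _ => ?_)
              have hcz : ∀ z, aeq (ℱ t) x z → Z' t z i j = Z' t x i j := fun z hz =>
                (aeq.eq_of_measurable (hZ'm t ht i j) hz).symm
              rw [cexp_mul_const hcz]
              have hzero : cexp (ℱ t) μ (fun z => W (t+1) z j - q t j z) x = 0 := by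
                rw [cexp_sub]
                have hqc : ∀ z, aeq (ℱ t) x z → q t j z = q t j x := fun z hz => by
                  simp only [hqdef]
                  exact (cexp_congr_class hz _).symm
                rw [cexp_of_const hqc hx]
                simp only [hqdef]
                exact sub_self _
              rw [hzero, mul_zero]
            rw [hA, hB, sub_zero]
          refine ⟨hYe, fun _ => ?_⟩
          rw [ae_iff_support]
          intro x hx
          have e' := ae_iff_support.1 hEq' x hx
          have e := hmain t ht x hx
          have r' : Z' t x *ᵥ Mnext μ ℱ W t x
              = (Y' (t+1) x + f (t+1) x (Y' (t+1) x) (Z' (t+1) x)) - Y' t x := by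
            rw [e']; abel
          have r : (F (T - t)).2 x *ᵥ Mnext μ ℱ W t x
              = ((F (T - (t+1))).1 x
                  + f (t+1) x ((F (T - (t+1))).1 x) ((F (T - (t+1))).2 x)) - (F (T - t)).1 x := by
            rw [e]; abel
          rw [r', r]
          have e1 := ae_iff_support.1 ihY x hx
          have e2 := ae_iff_support.1 hFe x hx
          have e3 := ae_iff_support.1 hYe x hx
          rw [e2, e1, e3]
    constructor
    · intro t ht
      exact (main T t ht (by omega)).1
    · intro t ht
      exact (main T t (le_of_lt ht) (by omega)).2 ht
end

section
/- Let X^ε and X̄ solve the controlled forward difference equation ΔX_t = b(t, X_t, u_t) + ∑_i e_i σ_i(t, X_t, u_t) M_{t+1} with the same initial condition x_0, under controls u^ε and ū that differ only at one time s, where u^ε_s = ū_s + εΔv. If b and σ_i Ĩ have uniformly bounded derivatives in (x,u), then sup_{0≤t≤T} E|X^ε_t - X̄_t|² ≤ C ε² E|Δv|² for a constant C independent of ε. -/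
open MeasureTheory Matrix Finset

lemma dot_eq_itilde {n : ℕ} (v M : Fin (n+1) → ℝ) (hM : ∑ j, M j = 0) :
    v ⬝ᵥ M = (v ᵥ* Itilde n) ⬝ᵥ (fun j : Fin n => M j.castSucc) := by
  have hinner : ∀ j : Fin n, (v ᵥ* Itilde n) j = v j.castSucc - v (Fin.last n) := by
    intro j
    simp only [vecMul, dotProduct, Itilde, Matrix.of_apply]
    rw [Fin.sum_univ_castSucc]
    simp [Fin.is_lt, Fin.val_eq_val, sub_eq_add_neg, Finset.sum_ite_eq', mul_ite]
  simp only [dotProduct, hinner]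
  have hL : ∑ i : Fin (n+1), v i * M i
      = ∑ j : Fin n, v j.castSucc * M j.castSucc + v (Fin.last n) * M (Fin.last n) :=
    Fin.sum_univ_castSucc _
  have hMsum : ∑ j : Fin n, M j.castSucc + M (Fin.last n) = 0 := by
    rw [← Fin.sum_univ_castSucc]; exact hM
  have : ∑ j : Fin n, (v j.castSucc - v (Fin.last n)) * M j.castSucc
      = ∑ j : Fin n, v j.castSucc * M j.castSucc - v (Fin.last n) * ∑ j : Fin n, M j.castSucc := by
    rw [Finset.mul_sum, ← Finset.sum_sub_distrib]
    congr 1; ext j; ring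
  have h2 : ∑ j : Fin n, M j.castSucc = - M (Fin.last n) := by linarith
  rw [hL, this, h2]
  ring

lemma dot_diff_le {n : ℕ} (S1 S2 M : Fin (n+1) → ℝ) (hM : ∑ j, M j = 0)
    (hM1 : ∀ j, |M j| ≤ 1) :
    |S1 ⬝ᵥ M - S2 ⬝ᵥ M| ≤ n * dist (S1 ᵥ* Itilde n) (S2 ᵥ* Itilde n) := by
  have h : S1 ⬝ᵥ M - S2 ⬝ᵥ M
      = ((S1 ᵥ* Itilde n) - (S2 ᵥ* Itilde n)) ⬝ᵥ (fun j : Fin n => M j.castSucc) := by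
    rw [sub_dotProduct, ← dot_eq_itilde S1 M hM, ← dot_eq_itilde S2 M hM]
  rw [h]
  calc |((S1 ᵥ* Itilde n) - (S2 ᵥ* Itilde n)) ⬝ᵥ (fun j : Fin n => M j.castSucc)|
      ≤ ∑ j : Fin n, |((S1 ᵥ* Itilde n) j - (S2 ᵥ* Itilde n) j) * M j.castSucc| := by
        simpa [dotProduct] using Finset.abs_sum_le_sum_abs
          (fun j : Fin n => ((S1 ᵥ* Itilde n) j - (S2 ᵥ* Itilde n) j) * M j.castSucc) univ
    _ ≤ ∑ j : Fin n, dist (S1 ᵥ* Itilde n) (S2 ᵥ* Itilde n) := by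
        apply Finset.sum_le_sum
        intro j _
        rw [abs_mul]
        calc |(S1 ᵥ* Itilde n) j - (S2 ᵥ* Itilde n) j| * |M j.castSucc|
            ≤ |(S1 ᵥ* Itilde n) j - (S2 ᵥ* Itilde n) j| * 1 :=
              mul_le_mul_of_nonneg_left (hM1 _) (abs_nonneg _)
          _ = dist ((S1 ᵥ* Itilde n) j) ((S2 ᵥ* Itilde n) j) := by rw [mul_one, Real.dist_eq]
          _ ≤ dist (S1 ᵥ* Itilde n) (S2 ᵥ* Itilde n) := dist_le_pi_dist _ _ j
    _ = n * dist (S1 ᵥ* Itilde n) (S2 ᵥ* Itilde n) := by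
        rw [Finset.sum_const, card_univ, Fintype.card_fin, nsmul_eq_mul]

noncomputable def gAux (K : ℝ) : ℕ → ℝ
  | 0 => 0
  | t+1 => K * (gAux K t + 1)

lemma gAux_nonneg {K : ℝ} (hK : 0 ≤ K) : ∀ t, 0 ≤ gAux K t
  | 0 => le_refl 0
  | t+1 => by have := gAux_nonneg hK t; simp only [gAux]; positivity

lemma gAux_mono {K : ℝ} (hK : 1 ≤ K) : Monotone (gAux K) := by
  apply monotone_nat_of_le_succ
  intro t
  have h0 := gAux_nonneg (le_trans zero_le_one hK) t
  simp only [gAux]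
  nlinarith


lemma Mnext_props {Ω : Type*} [mΩ : MeasurableSpace Ω] [Fintype Ω] [MeasurableSingletonClass Ω]
    (μ : Measure Ω) [IsProbabilityMeasure μ] {n : ℕ}
    (ℱ : Filtration ℕ mΩ) (W : ℕ → Ω → Fin (n + 1) → ℝ)
    (hbasis : ∀ t, ∀ᵐ ω ∂μ, ∃ k : Fin (n + 1), W t ω = fun j => if j = k then 1 else 0)
    (t : ℕ) :
    ∀ᵐ ω ∂μ, (∑ j, Mnext μ ℱ W t ω j = 0) ∧ (∀ j, |Mnext μ ℱ W t ω j| ≤ 1) := by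
  have hW : ∀ᵐ ω ∂μ, (∑ j, W (t+1) ω j = 1) ∧ ∀ j, 0 ≤ W (t+1) ω j ∧ W (t+1) ω j ≤ 1 := by
    filter_upwards [hbasis (t+1)] with ω hk
    obtain ⟨k, hk⟩ := hk
    refine ⟨?_, ?_⟩
    · rw [hk]; simp
    · intro j; rw [hk]; dsimp only; split <;> norm_num
  have hint : ∀ j : Fin (n+1), Integrable (fun ω' => W (t+1) ω' j) μ :=
    fun j => Integrable.of_finite
  have hone : (μ[fun _ : Ω => (1:ℝ) | ℱ t]) =ᵐ[μ] fun _ => (1:ℝ) := by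
    rw [condExp_const (μ := μ) (ℱ.le t) (1:ℝ)]
  have hce_sum : ∀ᵐ ω ∂μ, ∑ j, (μ[fun ω' => W (t+1) ω' j | ℱ t]) ω = 1 := by
    have h1 : (μ[fun ω' => ∑ j, W (t+1) ω' j | ℱ t]) =ᵐ[μ] fun _ => (1:ℝ) := by
      refine (condExp_congr_ae ?_).trans hone
      filter_upwards [hW] with ω hω using hω.1
    have h2 : (μ[fun ω' => ∑ j, W (t+1) ω' j | ℱ t])
        =ᵐ[μ] ∑ j, μ[fun ω' => W (t+1) ω' j | ℱ t] := by
      have := condExp_finset_sum (m := ℱ t) (μ := μ) (s := (univ : Finset (Fin (n+1))))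
        (f := fun j ω' => W (t+1) ω' j) (fun j _ => hint j)
      have heq : (fun ω' => ∑ j, W (t+1) ω' j)
          = ∑ j : Fin (n+1), (fun ω' => W (t+1) ω' j) := by
        ext ω'; simp [Finset.sum_apply]
      rw [heq]
      exact this
    have h3 := h2.symm.trans h1
    filter_upwards [h3] with ω hω
    simpa [Finset.sum_apply] using hω
  have hce_bd : ∀ᵐ ω ∂μ, ∀ j : Fin (n+1),
      0 ≤ (μ[fun ω' => W (t+1) ω' j | ℱ t]) ω ∧ (μ[fun ω' => W (t+1) ω' j | ℱ t]) ω ≤ 1 := by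
    rw [ae_all_iff]
    intro j
    have hnn : 0 ≤ᵐ[μ] μ[fun ω' => W (t+1) ω' j | ℱ t] := by
      refine condExp_nonneg ?_
      filter_upwards [hW] with ω hω using (hω.2 j).1
    have hub : μ[fun ω' => W (t+1) ω' j | ℱ t] ≤ᵐ[μ] fun _ => (1:ℝ) := by
      refine (condExp_mono (hint j) (integrable_const 1) ?_).trans hone.le
      filter_upwards [hW] with ω hω using (hω.2 j).2
    filter_upwards [hnn, hub] with ω h1 h2 using ⟨h1, h2⟩
  filter_upwards [hW, hce_sum, hce_bd] with ω h1 h2 h3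
  constructor
  · simp only [Mnext, Finset.sum_sub_distrib]
    rw [h1.1, h2]; ring
  · intro j
    have := h1.2 j
    have := h3 j
    rw [abs_le]
    constructor <;> [skip; skip] <;> simp only [Mnext] <;> linarith [this.1, this.2]

/-- **First estimate on the perturbed forward state.**  Let `X^ε` and `X̄` solve the controlled
forward difference equation `ΔX_t = b(t,X_t,u_t) + ∑_i e_i σ_i(t,X_t,u_t) M_{t+1}` with the
same initial condition, under controls `u^ε` and `ū` that differ only at one time `s`, where
`u^ε_s = ū_s + εΔv`.  If `b` and `σ_i Ĩ` have uniformly bounded derivatives in `(x,u)`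
(formulated as a uniform Lipschitz property), then
`sup_{0≤t≤T} 𝔼|X^ε_t - X̄_t|² ≤ C ε² 𝔼|Δv|²` for a constant `C` independent of `ε`. -/
theorem forward_state_estimate
    {Ω : Type*} [mΩ : MeasurableSpace Ω] [Fintype Ω] [MeasurableSingletonClass Ω]
    (μ : Measure Ω) [IsProbabilityMeasure μ] {n' m r : ℕ} (T s : ℕ) (hs : s ≤ T)
    (ℱ : Filtration ℕ mΩ) (W : ℕ → Ω → Fin (n' + 1) → ℝ)
    (hWad : ∀ t i, Measurable[ℱ t] fun ω => W t ω i)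
    (hbasis : ∀ t, ∀ᵐ ω ∂μ, ∃ k : Fin (n' + 1), W t ω = fun j => if j = k then 1 else 0)
    -- coefficients
    (b : ℕ → Ω → (Fin m → ℝ) → (Fin r → ℝ) → Fin m → ℝ)
    (σ : Fin m → ℕ → Ω → (Fin m → ℝ) → (Fin r → ℝ) → Fin (n' + 1) → ℝ)
    (hbad : ∀ t x u_, ∀ i, Measurable[ℱ t] fun ω => b t ω x u_ i)
    (hσad : ∀ i t x u_, ∀ j, Measurable[ℱ t] fun ω => σ i t ω x u_ j)
    -- uniformly bounded derivatives of `b` and `σ_i Ĩ` in `(x,u)` (Lipschitz form)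
    (L : NNReal)
    (hbLip : ∀ t ω, LipschitzWith L fun p : (Fin m → ℝ) × (Fin r → ℝ) => b t ω p.1 p.2)
    (hσLip : ∀ i t ω,
      LipschitzWith L fun p : (Fin m → ℝ) × (Fin r → ℝ) => (σ i t ω p.1 p.2) ᵥ* Itilde n')
    -- optimal control, perturbation direction
    (ub : ℕ → Ω → Fin r → ℝ) (hub : ∀ t i, Measurable[ℱ t] fun ω => ub t ω i)
    (Δv : Ω → Fin r → ℝ) (hΔv : ∀ i, Measurable[ℱ s] fun ω => Δv ω i)
    -- state trajectories
    (Xb : ℕ → Ω → Fin m → ℝ) (Xε : ℝ → ℕ → Ω → Fin m → ℝ)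
    (hXbad : ∀ t i, Measurable[ℱ t] fun ω => Xb t ω i)
    (hXεad : ∀ ε ∈ Set.Icc (0:ℝ) 1, ∀ t i, Measurable[ℱ t] fun ω => Xε ε t ω i)
    (hinit : ∀ ε ∈ Set.Icc (0:ℝ) 1, ∀ ω, Xε ε 0 ω = Xb 0 ω)
    (hXbdyn : ∀ t < T, ∀ᵐ ω ∂μ,
      Xb (t + 1) ω = Xb t ω + b t ω (Xb t ω) (ub t ω)
        + fun i => (σ i t ω (Xb t ω) (ub t ω)) ⬝ᵥ Mnext μ ℱ W t ω)
    (hXεdyn : ∀ ε ∈ Set.Icc (0:ℝ) 1, ∀ t < T, ∀ᵐ ω ∂μ,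
      Xε ε (t + 1) ω = Xε ε t ω
        + b t ω (Xε ε t ω) (ub t ω + (if t = s then ε • Δv ω else 0))
        + fun i => (σ i t ω (Xε ε t ω) (ub t ω + (if t = s then ε • Δv ω else 0)))
            ⬝ᵥ Mnext μ ℱ W t ω) :
    ∃ C > (0 : ℝ), ∀ ε ∈ Set.Icc (0:ℝ) 1, ∀ t ≤ T,
      ∫ ω, (∑ i, (Xε ε t ω i - Xb t ω i) ^ 2) ∂μ
        ≤ C * ε ^ 2 * ∫ ω, (∑ j, (Δv ω j) ^ 2) ∂μ := by
  classical
  set c : ℝ := ((n' : ℝ) + 1) * L with hcdef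
  have hc0 : 0 ≤ c := by positivity
  set K : ℝ := 1 + c with hKdef
  have hK1 : (1:ℝ) ≤ K := by linarith
  have hK0 : (0:ℝ) ≤ K := by linarith
  refine ⟨(m : ℝ) * (gAux K T)^2 + 1, by positivity, ?_⟩
  intro ε hε t ht
  have hε0 : (0:ℝ) ≤ ε := hε.1
  -- the good event
  have hgood : ∀ᵐ ω ∂μ, ∀ t', t' < T →
      (Xb (t'+1) ω = Xb t' ω + b t' ω (Xb t' ω) (ub t' ω)
        + fun i => (σ i t' ω (Xb t' ω) (ub t' ω)) ⬝ᵥ Mnext μ ℱ W t' ω)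
      ∧ (Xε ε (t'+1) ω = Xε ε t' ω
        + b t' ω (Xε ε t' ω) (ub t' ω + (if t' = s then ε • Δv ω else 0))
        + fun i => (σ i t' ω (Xε ε t' ω) (ub t' ω + (if t' = s then ε • Δv ω else 0)))
            ⬝ᵥ Mnext μ ℱ W t' ω)
      ∧ (∑ j, Mnext μ ℱ W t' ω j = 0) ∧ (∀ j, |Mnext μ ℱ W t' ω j| ≤ 1) := by
    rw [ae_all_iff]
    intro t'
    by_cases h : t' < T
    · filter_upwards [hXbdyn t' h, hXεdyn ε hε t' h, Mnext_props μ ℱ W hbasis t']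
        with ω h1 h2 h3 _
      exact ⟨h1, h2, h3.1, h3.2⟩
    · filter_upwards with ω h'
      exact absurd h' h
  -- pointwise Gronwall-type estimate on the good event
  have key : ∀ᵐ ω ∂μ, ∀ t' ≤ T,
      dist (Xε ε t' ω) (Xb t' ω) ≤ gAux K t' * (ε * ‖Δv ω‖) := by
    filter_upwards [hgood] with ω hω
    intro t'
    induction t' with
    | zero => intro _; simp [hinit ε hε ω, gAux]
    | succ t' ih =>
      intro ht1
      have htT : t' < T := Nat.lt_of_succ_le ht1
      obtain ⟨hXbe, hXee, hM0, hM1⟩ := hω t' htT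
      have ihD := ih (Nat.le_of_lt htT)
      set N : ℝ := ε * ‖Δv ω‖ with hNdef
      have hN0 : 0 ≤ N := by positivity
      set uε : Fin r → ℝ := ub t' ω + (if t' = s then ε • Δv ω else 0) with huε
      set D : ℝ := dist (Xε ε t' ω) (Xb t' ω) with hDdef
      have hD0 : 0 ≤ D := dist_nonneg
      have hg0 : 0 ≤ gAux K t' := gAux_nonneg hK0 t'
      have hδ : dist uε (ub t' ω) ≤ N := by
        rw [huε, dist_eq_norm, add_sub_cancel_left]
        split_ifs with hts
        · rw [norm_smul, Real.norm_eq_abs, abs_of_nonneg hε0, hNdef]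
        · simpa using hN0
      have hpair : dist ((Xε ε t' ω, uε) : (Fin m → ℝ) × (Fin r → ℝ)) (Xb t' ω, ub t' ω)
          ≤ D + N := by
        rw [Prod.dist_eq]
        apply max_le
        · linarith
        · linarith [hδ]
      have hbd : dist (b t' ω (Xε ε t' ω) uε) (b t' ω (Xb t' ω) (ub t' ω))
          ≤ (L : ℝ) * (D + N) := by
        refine le_trans ((hbLip t' ω).dist_le_mul (Xε ε t' ω, uε) (Xb t' ω, ub t' ω)) ?_
        exact mul_le_mul_of_nonneg_left hpair L.2
      have hσd : ∀ i, dist ((σ i t' ω (Xε ε t' ω) uε) ᵥ* Itilde n')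
          ((σ i t' ω (Xb t' ω) (ub t' ω)) ᵥ* Itilde n') ≤ (L : ℝ) * (D + N) := by
        intro i
        refine le_trans ((hσLip i t' ω).dist_le_mul (Xε ε t' ω, uε) (Xb t' ω, ub t' ω)) ?_
        exact mul_le_mul_of_nonneg_left hpair L.2
      have hcomp : ∀ i, dist (Xε ε (t'+1) ω i) (Xb (t'+1) ω i) ≤ D + c * (D + N) := by
        intro i
        have hdiff : Xε ε (t'+1) ω i - Xb (t'+1) ω i
            = (Xε ε t' ω i - Xb t' ω i)
            + (b t' ω (Xε ε t' ω) uε i - b t' ω (Xb t' ω) (ub t' ω) i)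
            + ((σ i t' ω (Xε ε t' ω) uε) ⬝ᵥ Mnext μ ℱ W t' ω
                - (σ i t' ω (Xb t' ω) (ub t' ω)) ⬝ᵥ Mnext μ ℱ W t' ω) := by
          rw [hXee, hXbe]
          simp only [Pi.add_apply]
          ring
        have h1 : |Xε ε t' ω i - Xb t' ω i| ≤ D := by
          rw [← Real.dist_eq]; exact dist_le_pi_dist _ _ i
        have h2 : |b t' ω (Xε ε t' ω) uε i - b t' ω (Xb t' ω) (ub t' ω) i|
            ≤ (L : ℝ) * (D + N) := by
          rw [← Real.dist_eq]
          exact le_trans (dist_le_pi_dist _ _ i) hbd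
        have h3 : |(σ i t' ω (Xε ε t' ω) uε) ⬝ᵥ Mnext μ ℱ W t' ω
            - (σ i t' ω (Xb t' ω) (ub t' ω)) ⬝ᵥ Mnext μ ℱ W t' ω|
            ≤ (n' : ℝ) * ((L : ℝ) * (D + N)) := by
          refine le_trans (dot_diff_le _ _ _ hM0 hM1) ?_
          exact mul_le_mul_of_nonneg_left (hσd i) (Nat.cast_nonneg n')
        have habs : |Xε ε (t'+1) ω i - Xb (t'+1) ω i| ≤ D + ((L:ℝ) * (D+N))
            + (n' : ℝ) * ((L : ℝ) * (D + N)) := by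
          rw [hdiff]
          exact le_trans (abs_add_three _ _ _) (by linarith)
        rw [Real.dist_eq]
        have hceq : c * (D + N) = (L:ℝ) * (D+N) + (n' : ℝ) * ((L : ℝ) * (D + N)) := by
          rw [hcdef]; ring
        linarith [habs]
      have hDist : dist (Xε ε (t'+1) ω) (Xb (t'+1) ω) ≤ D + c * (D + N) := by
        have hrhs : 0 ≤ D + c * (D + N) := by
          have := mul_nonneg hc0 (by linarith : (0:ℝ) ≤ D + N)
          linarith
        rw [dist_pi_le_iff hrhs]
        exact hcomp
      refine hDist.trans ?_
      have hgs : gAux K (t'+1) = K * (gAux K t' + 1) := rfl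
      rw [hgs, hKdef]
      nlinarith [ihD, hc0, hN0, hg0, mul_nonneg hc0 (sub_nonneg.2 ihD)]
  -- bound the euclidean norm of Δv by the sup norm
  have hNorm2 : ∀ ω : Ω, ‖Δv ω‖^2 ≤ ∑ j, (Δv ω j)^2 := by
    intro ω
    have h1 : ‖Δv ω‖ ≤ Real.sqrt (∑ j, (Δv ω j)^2) := by
      rw [pi_norm_le_iff_of_nonneg (Real.sqrt_nonneg _)]
      intro j
      rw [Real.norm_eq_abs, ← Real.sqrt_sq_eq_abs]
      exact Real.sqrt_le_sqrt (Finset.single_le_sum (fun j _ => sq_nonneg (Δv ω j)) (mem_univ j))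
    calc ‖Δv ω‖^2 ≤ Real.sqrt (∑ j, (Δv ω j)^2)^2 := pow_le_pow_left₀ (norm_nonneg _) h1 2
      _ = ∑ j, (Δv ω j)^2 := Real.sq_sqrt (Finset.sum_nonneg fun j _ => sq_nonneg _)
  have hfin : ∀ᵐ ω ∂μ, ∑ i, (Xε ε t ω i - Xb t ω i)^2
      ≤ ((m:ℝ) * (gAux K T)^2 + 1) * ε^2 * ∑ j, (Δv ω j)^2 := by
    filter_upwards [key] with ω hω
    have hd := hω t ht
    have hgt : gAux K t ≤ gAux K T := gAux_mono hK1 ht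
    have hstep : ∀ i, (Xε ε t ω i - Xb t ω i)^2 ≤ (gAux K T)^2 * (ε^2 * ‖Δv ω‖^2) := by
      intro i
      have h1 : |Xε ε t ω i - Xb t ω i| ≤ gAux K T * (ε * ‖Δv ω‖) := by
        calc |Xε ε t ω i - Xb t ω i| = dist (Xε ε t ω i) (Xb t ω i) := (Real.dist_eq _ _).symm
          _ ≤ dist (Xε ε t ω) (Xb t ω) := dist_le_pi_dist _ _ i
          _ ≤ gAux K t * (ε * ‖Δv ω‖) := hd
          _ ≤ gAux K T * (ε * ‖Δv ω‖) := by
              apply mul_le_mul_of_nonneg_right hgt; positivity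
      calc (Xε ε t ω i - Xb t ω i)^2 = |Xε ε t ω i - Xb t ω i|^2 := (sq_abs _).symm
        _ ≤ (gAux K T * (ε * ‖Δv ω‖))^2 := pow_le_pow_left₀ (abs_nonneg _) h1 2
        _ = (gAux K T)^2 * (ε^2 * ‖Δv ω‖^2) := by ring
    have hsum0 : 0 ≤ ∑ j, (Δv ω j)^2 := Finset.sum_nonneg fun j _ => sq_nonneg _
    calc ∑ i, (Xε ε t ω i - Xb t ω i)^2
        ≤ ∑ _i : Fin m, (gAux K T)^2 * (ε^2 * ‖Δv ω‖^2) :=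
          Finset.sum_le_sum fun i _ => hstep i
      _ = (m:ℝ) * ((gAux K T)^2 * (ε^2 * ‖Δv ω‖^2)) := by
          rw [Finset.sum_const, card_univ, Fintype.card_fin, nsmul_eq_mul]
      _ ≤ (m:ℝ) * ((gAux K T)^2 * (ε^2 * ∑ j, (Δv ω j)^2)) := by
          apply mul_le_mul_of_nonneg_left _ (Nat.cast_nonneg m)
          apply mul_le_mul_of_nonneg_left _ (sq_nonneg _)
          exact mul_le_mul_of_nonneg_left (hNorm2 ω) (sq_nonneg _)
      _ ≤ ((m:ℝ) * (gAux K T)^2 + 1) * ε^2 * ∑ j, (Δv ω j)^2 := by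
          nlinarith [mul_nonneg (sq_nonneg ε) hsum0]
  calc ∫ ω, (∑ i, (Xε ε t ω i - Xb t ω i) ^ 2) ∂μ
      ≤ ∫ ω, ((m:ℝ) * (gAux K T)^2 + 1) * ε^2 * ∑ j, (Δv ω j)^2 ∂μ :=
        integral_mono_ae Integrable.of_finite Integrable.of_finite hfin
    _ = ((m:ℝ) * (gAux K T)^2 + 1) * ε ^ 2 * ∫ ω, (∑ j, (Δv ω j)^2) ∂μ :=
        integral_const_mul _ _
end
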